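/- arXiv:1212.4217 — 2 statements merged into one kernel-verified Lean document; each statement's English description precedes it below -/
import Mathlib

section
/- For the four-qubit encoded state |Ψ⟩ = (1/2) Σ_{j=0}^{3} |j⟩_D ⊗ |β_j⟩_{12} ⊗ |β_j⟩_{34}, the reduced state on D together with any pair {r,s} ⊂ {1,2,3,4} of player qubits is separable across the cut D | {r,s}: it can be written as (1/4) Σ_k |a_k⟩⟨a_k|_D ⊗ |β_k⟩⟨β_k|_{rs} for some unit vectors |a_k⟩ in the dealer's space. -/
open Matrix

/-- The four Bell states on two qubits. -/
noncomputable def bellv (k : Fin 4) (p : Fin 2 × Fin 2) : ℂ :=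
  if p.2 = p.1 + ⟨k.val / 2, by omega⟩ then
    (if k.val % 2 = 1 ∧ p.1 = 1 then -((Real.sqrt 2 : ℂ))⁻¹ else ((Real.sqrt 2 : ℂ))⁻¹)
  else 0

/-- `|Ψ⟩ = (1/2) Σ_j |j⟩_D ⊗ |β_j⟩_{12} ⊗ |β_j⟩_{34}`, the four player qubits being
labelled by `Fin 4` (qubits 1,2,3,4 are `0,1,2,3`). -/
noncomputable def Ψ (j : Fin 4) (f : Fin 4 → Fin 2) : ℂ :=
  (1 / 2 : ℂ) * bellv j (f 0, f 1) * bellv j (f 2, f 3)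

/-- The configuration of the four player qubits taking value `x` at `r`, `y` at `s`,
and given by `h` elsewhere. -/
def cfg (r s : Fin 4) (x y : Fin 2) (h : Fin 4 → Fin 2) : Fin 4 → Fin 2 :=
  fun t => if t = r then x else if t = s then y else h t

/-- The reduced density matrix of the dealer together with the pair of player
qubits `{r,s}`, obtained from `|Ψ⟩⟨Ψ|` by tracing out the other two player qubits. -/
noncomputable def ρDrs (r s : Fin 4) :
    Matrix (Fin 4 × (Fin 2 × Fin 2)) (Fin 4 × (Fin 2 × Fin 2)) ℂ :=
  Matrix.of fun a b =>
    ∑ h ∈ Finset.univ.filter (fun h : Fin 4 → Fin 2 => h r = 0 ∧ h s = 0),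
      Ψ a.1 (cfg r s a.2.1 a.2.2 h) * star (Ψ b.1 (cfg r s b.2.1 b.2.2 h))

/-! ### Auxiliary integer-valued combinatorics -/

/-- Integer version of the Bell states: `bellv k p = (√2)⁻¹ * Bz k p`. -/
def Bz (k : Fin 4) (p : Fin 2 × Fin 2) : ℤ :=
  if p.2 = p.1 + ⟨k.val / 2, by omega⟩ then
    (if k.val % 2 = 1 ∧ p.1 = 1 then -1 else 1)
  else 0

/-- Integer version of `Ψ` (up to the factor `1/4`). -/
def Pz (j : Fin 4) (f : Fin 4 → Fin 2) : ℤ := Bz j (f 0, f 1) * Bz j (f 2, f 3)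

def M1 : Fin 4 → Fin 4 → ℤ := ![![1,1,1,1],![1,1,-1,-1],![1,-1,1,-1],![1,-1,-1,1]]
def M2 : Fin 4 → Fin 4 → ℤ := ![![1,1,1,-1],![1,1,-1,1],![1,-1,1,1],![1,-1,-1,-1]]

/-- Twice the coefficient matrix of the dealer vectors `a_k`, depending on the pair `{r,s}`. -/
def Az (r s : Fin 4) : Fin 4 → Fin 4 → ℤ :=
  if r.val / 2 = s.val / 2 then (fun k j => if k = j then 2 else 0)
  else if r.val % 2 = s.val % 2 then M1 else M2

lemma hnormZ : ∀ r s k : Fin 4, ∑ j : Fin 4, Az r s k j * Az r s k j = 4 := by decide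

lemma hmatZ : ∀ r s : Fin 4, r ≠ s → ∀ a b : Fin 4 × (Fin 2 × Fin 2),
    2 * ∑ h ∈ Finset.univ.filter (fun h : Fin 4 → Fin 2 => h r = 0 ∧ h s = 0),
        Pz a.1 (cfg r s a.2.1 a.2.2 h) * Pz b.1 (cfg r s b.2.1 b.2.2 h)
    = ∑ k : Fin 4, Az r s k a.1 * Az r s k b.1 * (Bz k a.2 * Bz k b.2) := by decide

/-! ### Bridging lemmas -/

lemma sqrt2_inv_sq : ((Real.sqrt 2 : ℂ))⁻¹ * ((Real.sqrt 2 : ℂ))⁻¹ = 1 / 2 := by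
  rw [← mul_inv]
  norm_cast
  rw [Real.mul_self_sqrt (by norm_num)]
  norm_num

lemma bellv_eq (k : Fin 4) (p : Fin 2 × Fin 2) :
    bellv k p = ((Real.sqrt 2 : ℂ))⁻¹ * (Bz k p : ℂ) := by
  unfold bellv Bz
  split_ifs <;> push_cast <;> ring

lemma star_bellv (k : Fin 4) (p : Fin 2 × Fin 2) : star (bellv k p) = bellv k p := by
  rw [bellv_eq]
  simp [star_mul', star_inv₀, Complex.star_def, Complex.conj_ofReal]

lemma bell_mul (k : Fin 4) (p q : Fin 2 × Fin 2) :
    bellv k p * star (bellv k q) = (1 / 2 : ℂ) * ((Bz k p * Bz k q : ℤ) : ℂ) := by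
  rw [star_bellv, bellv_eq, bellv_eq]
  push_cast
  rw [show ((Real.sqrt 2 : ℂ))⁻¹ * (Bz k p : ℂ) * (((Real.sqrt 2 : ℂ))⁻¹ * (Bz k q : ℂ))
      = (((Real.sqrt 2 : ℂ))⁻¹ * ((Real.sqrt 2 : ℂ))⁻¹) * ((Bz k p : ℂ) * (Bz k q : ℂ)) by ring,
    sqrt2_inv_sq]

lemma Ψ_int (j : Fin 4) (f : Fin 4 → Fin 2) :
    Ψ j f = (1 / 4 : ℂ) * ((Pz j f : ℤ) : ℂ) := by
  unfold Ψ Pz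
  rw [bellv_eq, bellv_eq]
  push_cast
  rw [show (1 / 2 : ℂ) * (((Real.sqrt 2 : ℂ))⁻¹ * (Bz j (f 0, f 1) : ℂ))
        * (((Real.sqrt 2 : ℂ))⁻¹ * (Bz j (f 2, f 3) : ℂ))
      = (1 / 2 : ℂ) * (((Real.sqrt 2 : ℂ))⁻¹ * ((Real.sqrt 2 : ℂ))⁻¹)
        * ((Bz j (f 0, f 1) : ℂ) * (Bz j (f 2, f 3) : ℂ)) by ring,
    sqrt2_inv_sq]
  ring

lemma star_Ψ (j : Fin 4) (f : Fin 4 → Fin 2) : star (Ψ j f) = Ψ j f := by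
  rw [Ψ_int]
  simp [star_mul', star_intCast, Complex.star_def, map_div₀]

/-- For any pair `{r,s}` of distinct player qubits, the reduced state of the dealer
together with `{r,s}` is separable across the cut `D | {r,s}`: it has the form
`(1/4) Σ_k |a_k⟩⟨a_k|_D ⊗ |β_k⟩⟨β_k|_{rs}` for some unit vectors `|a_k⟩` of the
dealer's space. -/
theorem reduced_pair_separable (r s : Fin 4) (hrs : r ≠ s) :
    ∃ a : Fin 4 → (Fin 4 → ℂ),
      (∀ k, ∑ j : Fin 4, a k j * star (a k j) = 1) ∧
      ρDrs r s = (1 / 4 : ℂ) •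
        Matrix.of (fun u v : Fin 4 × (Fin 2 × Fin 2) =>
          ∑ k : Fin 4,
            (a k u.1 * star (a k v.1)) * (bellv k u.2 * star (bellv k v.2))) := by
  refine ⟨fun k j => (Az r s k j : ℂ) / 2, ?_, ?_⟩
  · intro k
    have key : ∀ j : Fin 4, ((Az r s k j : ℂ) / 2) * star ((Az r s k j : ℂ) / 2)
        = ((Az r s k j * Az r s k j : ℤ) : ℂ) / 4 := by
      intro j
      simp only [star_div₀, star_intCast, star_ofNat]
      push_cast
      ring
    rw [Finset.sum_congr rfl (fun j _ => key j), ← Finset.sum_div, ← Int.cast_sum,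
      hnormZ r s k]
    norm_num
  · ext a b
    have hm := hmatZ r s hrs a b
    simp only [ρDrs, Matrix.smul_apply, Matrix.of_apply, smul_eq_mul]
    have hL : ∀ h : Fin 4 → Fin 2,
        Ψ a.1 (cfg r s a.2.1 a.2.2 h) * star (Ψ b.1 (cfg r s b.2.1 b.2.2 h))
        = (1 / 16 : ℂ) * ((Pz a.1 (cfg r s a.2.1 a.2.2 h) * Pz b.1 (cfg r s b.2.1 b.2.2 h) : ℤ) : ℂ) := by
      intro h
      rw [star_Ψ, Ψ_int, Ψ_int]
      push_cast
      ring
    have hR : ∀ k : Fin 4,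
        (((Az r s k a.1 : ℂ) / 2) * star ((Az r s k b.1 : ℂ) / 2))
          * (bellv k a.2 * star (bellv k b.2))
        = (1 / 8 : ℂ) * ((Az r s k a.1 * Az r s k b.1 * (Bz k a.2 * Bz k b.2) : ℤ) : ℂ) := by
      intro k
      rw [bell_mul]
      simp only [star_div₀, star_intCast, star_ofNat]
      push_cast
      ring
    rw [Finset.sum_congr rfl (fun h _ => hL h), ← Finset.mul_sum, ← Int.cast_sum,
      Finset.sum_congr rfl (fun k _ => hR k), ← Finset.mul_sum, ← Int.cast_sum, ← hm]
    push_cast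
    ring
end

section
/- Let ρ = Σ_i p_i ρ_i be a convex combination of density matrices on a finite-dimensional Hilbert space, where (p_i) is a probability distribution. Then S(Σ_i p_i ρ_i) − Σ_i p_i S(ρ_i) ≤ H(p), where S is the von Neumann entropy and H(p) = −Σ_i p_i log p_i is the Shannon entropy of (p_i). -/
/-!
Write `∑ i, p i • ρ i` as the ensemble `∑ (i, j), ψᵢⱼ ψᵢⱼᴴ` with `ψᵢⱼ = √(pᵢ μᵢⱼ) eᵢⱼ`, where
`μᵢⱼ` and `eᵢⱼ` are the eigenvalues and orthonormal eigenvectors of `ρᵢ`. Any ensemble satisfies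
`S(∑ₐ ψₐ ψₐᴴ) ≤ ∑ₐ η(‖ψₐ‖²)` with `η x = -x log x`: if `λₖ`, `eₖ` are the eigenvalues and
eigenvectors of the mixture, the matrix `Φₐₖ = ⟪ψₐ, eₖ⟫` has orthogonal columns of squared
norms `λₖ` and rows of squared norms `‖ψₐ‖²`. Hence `Dₐₖ = |Φₐₖ|² / λₖ` has column sums `1`
wherever `λₖ ≠ 0` and, by Bessel's inequality, row sums at most `1`, so concavity of `η` gives
`∑ₖ η(λₖ) ≤ ∑ₐ η((D λ)ₐ)`. Finally `∑ᵢⱼ η(pᵢ μᵢⱼ) = H(p) + ∑ᵢ pᵢ S(ρᵢ)` because `∑ⱼ μᵢⱼ = 1`.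
-/

open Matrix ComplexOrder

/-- The von Neumann entropy `S(ρ) = −tr(ρ log ρ)` of a matrix, computed from the
eigenvalues when the matrix is Hermitian (and set to `0` otherwise). -/
noncomputable def vnEntropy {n : ℕ} (ρ : Matrix (Fin n) (Fin n) ℂ) : ℝ :=
  if h : ρ.IsHermitian then ∑ i, Real.negMulLog (h.eigenvalues i) else 0

namespace Real

lemma mul_negMulLog_le_negMulLog_mul {c y : ℝ} (hc0 : 0 ≤ c) (hc1 : c ≤ 1) (hy : 0 ≤ y) :
    c * negMulLog y ≤ negMulLog (c * y) := by
  rw [negMulLog_mul]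
  nlinarith [negMulLog_nonneg hc0 hc1]

lemma sum_mul_negMulLog_le_negMulLog_sum {κ : Type*} (s : Finset κ) {t x : κ → ℝ}
    (ht : ∀ k ∈ s, 0 ≤ t k) (ht1 : ∑ k ∈ s, t k ≤ 1) (hx : ∀ k ∈ s, 0 ≤ x k) :
    ∑ k ∈ s, t k * negMulLog (x k) ≤ negMulLog (∑ k ∈ s, t k * x k) := by
  set c := ∑ k ∈ s, t k
  rcases (Finset.sum_nonneg ht).eq_or_lt with hc | hc
  · have ht0 : ∀ k ∈ s, t k = 0 := (Finset.sum_eq_zero_iff_of_nonneg ht).mp hc.symm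
    rw [Finset.sum_eq_zero fun k hk => by rw [ht0 k hk, zero_mul],
      Finset.sum_eq_zero fun k hk => by rw [ht0 k hk, zero_mul], negMulLog_zero]
  have hc0 : c ≠ 0 := hc.ne'
  have hw : ∑ k ∈ s, t k / c = 1 := by rw [← Finset.sum_div, div_self hc0]
  have hjensen : ∑ k ∈ s, t k / c * negMulLog (x k) ≤ negMulLog (∑ k ∈ s, t k / c * x k) :=
    concaveOn_negMulLog.le_map_sum (fun k hk => div_nonneg (ht k hk) hc.le) hw hx
  calc ∑ k ∈ s, t k * negMulLog (x k)
      = c * ∑ k ∈ s, t k / c * negMulLog (x k) := by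
        rw [Finset.mul_sum]; exact Finset.sum_congr rfl fun k _ => by field_simp
    _ ≤ c * negMulLog (∑ k ∈ s, t k / c * x k) := mul_le_mul_of_nonneg_left hjensen hc.le
    _ ≤ negMulLog (c * ∑ k ∈ s, t k / c * x k) :=
        mul_negMulLog_le_negMulLog_mul hc.le ht1
          (Finset.sum_nonneg fun k hk => mul_nonneg (div_nonneg (ht k hk) hc.le) (hx k hk))
    _ = negMulLog (∑ k ∈ s, t k * x k) := by
        rw [Finset.mul_sum]; congr 1; exact Finset.sum_congr rfl fun k _ => by field_simp

theorem sum_negMulLog_le_sum_negMulLog_mulVec {α κ : Type*} [Fintype α] [Fintype κ]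
    {D : Matrix α κ ℝ} {l : κ → ℝ} (hD : ∀ a k, 0 ≤ D a k) (hl : ∀ k, 0 ≤ l k)
    (hcol : ∀ k, l k ≠ 0 → ∑ a, D a k = 1) (hrow : ∀ a, ∑ k, D a k ≤ 1) :
    ∑ k, negMulLog (l k) ≤ ∑ a, negMulLog ((D *ᵥ l) a) :=
  calc ∑ k, negMulLog (l k)
      = ∑ k, ∑ a, D a k * negMulLog (l k) := by
        refine Finset.sum_congr rfl fun k _ => ?_
        rcases eq_or_ne (l k) 0 with h | h
        · simp [h]
        · rw [← Finset.sum_mul, hcol k h, one_mul]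
    _ = ∑ a, ∑ k, D a k * negMulLog (l k) := Finset.sum_comm
    _ ≤ ∑ a, negMulLog ((D *ᵥ l) a) := Finset.sum_le_sum fun a _ =>
        sum_mul_negMulLog_le_negMulLog_sum _ (fun k _ => hD a k) (hrow a) fun k _ => hl k

theorem sum_sum_negMulLog_mul {ι κ : Type*} [Fintype ι] [Fintype κ] (p : ι → ℝ)
    {μ : ι → κ → ℝ} (hμ : ∀ i, ∑ j, μ i j = 1) :
    ∑ i, ∑ j, negMulLog (p i * μ i j) =
      ∑ i, negMulLog (p i) + ∑ i, p i * ∑ j, negMulLog (μ i j) := by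
  rw [← Finset.sum_add_distrib]
  refine Finset.sum_congr rfl fun i _ => ?_
  simp_rw [negMulLog_mul]
  rw [Finset.sum_add_distrib, ← Finset.sum_mul, hμ, one_mul, Finset.mul_sum]

end Real

open scoped InnerProductSpace

theorem sum_norm_inner_sq_div_norm_sq_le {𝕜 E κ : Type*} [RCLike 𝕜] [NormedAddCommGroup E]
    [InnerProductSpace 𝕜 E] [Fintype κ] {v : κ → E} (hv : Pairwise fun k k' => ⟪v k, v k'⟫_𝕜 = 0)
    (x : E) : ∑ k, ‖⟪v k, x⟫_𝕜‖ ^ 2 / ‖v k‖ ^ 2 ≤ ‖x‖ ^ 2 := by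
  classical
  let w : {k // v k ≠ 0} → E := fun k => (‖v k‖⁻¹ : 𝕜) • v k
  have hw : Orthonormal 𝕜 w := by
    rw [orthonormal_iff_ite]
    rintro ⟨k, hk⟩ ⟨k', _⟩
    by_cases h : k = k'
    · subst h
      rw [if_pos rfl, inner_self_eq_norm_sq_to_K, norm_smul_inv_norm hk]
      simp
    · simp [w, inner_smul_left, inner_smul_right, hv h, h]
  calc ∑ k, ‖⟪v k, x⟫_𝕜‖ ^ 2 / ‖v k‖ ^ 2
      = ∑ k ∈ Finset.univ.filter (v · ≠ 0), ‖⟪v k, x⟫_𝕜‖ ^ 2 / ‖v k‖ ^ 2 :=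
        (Finset.sum_filter_of_ne fun k _ hk hv0 => by simp [hv0] at hk).symm
    _ = ∑ k : {k // v k ≠ 0}, ‖⟪v k, x⟫_𝕜‖ ^ 2 / ‖v k‖ ^ 2 := Finset.sum_subtype _ (by simp) _
    _ = ∑ k : {k // v k ≠ 0}, ‖⟪w k, x⟫_𝕜‖ ^ 2 := by
        simp [w, inner_smul_left, mul_pow, div_eq_inv_mul]
    _ ≤ ‖x‖ ^ 2 := hw.sum_inner_products_le x

open Real (negMulLog)

namespace Matrix

variable {𝕜 m α κ : Type*} [RCLike 𝕜]

theorem conjTranspose_mul_self_apply_self [Fintype α] (Φ : Matrix α κ 𝕜) (k : κ) :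
    (Φᴴ * Φ) k k = ((∑ a, ‖Φ a k‖ ^ 2 : ℝ) : 𝕜) := by
  simp [mul_apply, RCLike.conj_mul]

theorem sum_negMulLog_sum_norm_sq_le_of_isDiag [Fintype α] [Fintype κ] {Φ : Matrix α κ 𝕜}
    (hΦ : (Φᴴ * Φ).IsDiag) :
    ∑ k, negMulLog (∑ a, ‖Φ a k‖ ^ 2) ≤ ∑ a, negMulLog (∑ k, ‖Φ a k‖ ^ 2) := by
  classical
  let col : κ → EuclideanSpace 𝕜 α := fun k => WithLp.toLp 2 (fun a => Φ a k)
  have hcol : ∀ k, ‖col k‖ ^ 2 = ∑ a, ‖Φ a k‖ ^ 2 := fun k => EuclideanSpace.norm_sq_eq _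
  have hrow : ∀ a, ∑ k, ‖Φ a k‖ ^ 2 / ‖col k‖ ^ 2 ≤ 1 := by
    intro a
    have horth : Pairwise fun k k' => ⟪col k, col k'⟫_𝕜 = 0 := fun k k' h => by
      simpa [col, EuclideanSpace.inner_toLp_toLp, dotProduct, mul_apply, mul_comm] using hΦ h
    simpa [col, EuclideanSpace.inner_single_right] using
      sum_norm_inner_sq_div_norm_sq_le horth (EuclideanSpace.single a (1 : 𝕜))
  set l : κ → ℝ := fun k => ∑ a, ‖Φ a k‖ ^ 2
  have hl : ∀ k, 0 ≤ l k := fun k => by positivity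
  have hl0 : ∀ a k, l k = 0 → Φ a k = 0 := fun a k h => by
    simpa using (Finset.sum_eq_zero_iff_of_nonneg (fun b _ => by positivity)).mp h a
      (Finset.mem_univ a)
  let D : Matrix α κ ℝ := of fun a k => ‖Φ a k‖ ^ 2 / l k
  have hmulVec : ∀ a, (D *ᵥ l) a = ∑ k, ‖Φ a k‖ ^ 2 := fun a =>
    Finset.sum_congr rfl fun k _ => div_mul_cancel_of_imp fun h => by simp [hl0 a k h]
  have key := Real.sum_negMulLog_le_sum_negMulLog_mulVec (D := D)
    (fun a k => div_nonneg (by positivity) (hl k)) hl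
    (fun k hk => by simp only [D, of_apply, ← Finset.sum_div]; exact div_self hk)
    fun a => by simpa [D, hcol] using hrow a
  simpa only [hmulVec] using key

theorem inner_toLp_sum_vecMulVec_mulVec [Fintype m] [Fintype α] (ψ : α → EuclideanSpace 𝕜 m)
    (x y : EuclideanSpace 𝕜 m) :
    ⟪x, WithLp.toLp 2 ((∑ a, vecMulVec ⇑(ψ a) (star ⇑(ψ a))) *ᵥ ⇑y)⟫_𝕜 =
      ∑ a, ⟪x, ψ a⟫_𝕜 * ⟪ψ a, y⟫_𝕜 := by
  simp [sum_mulVec, vecMulVec_mulVec, inner_sum, inner_smul_right, mul_comm,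
    EuclideanSpace.inner_eq_star_dotProduct, dotProduct_comm]

theorem IsHermitian.eq_sum_eigenvalues_smul_vecMulVec [Fintype m] [DecidableEq m]
    {A : Matrix m m 𝕜} (hA : A.IsHermitian) :
    A = ∑ j, hA.eigenvalues j •
      vecMulVec ⇑(hA.eigenvectorBasis j) (star ⇑(hA.eigenvectorBasis j)) := by
  conv_lhs => rw [hA.spectral_theorem, Unitary.conjStarAlgAut_apply]
  ext i i'
  simp [mul_apply, diagonal_apply, sum_apply, vecMulVec_apply, RCLike.real_smul_eq_coe_mul]
  refine Finset.sum_congr rfl fun j _ => by ring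

theorem smul_vecMulVec_self_star {r : ℝ} (hr : 0 ≤ r) (u : m → 𝕜) :
    r • vecMulVec u (star u) = vecMulVec ((√r : 𝕜) • u) (star ((√r : 𝕜) • u)) := by
  rw [star_smul, RCLike.star_def, RCLike.conj_ofReal, smul_vecMulVec, vecMulVec_smul, smul_smul,
    ← RCLike.ofReal_mul, Real.mul_self_sqrt hr, RCLike.real_smul_eq_coe_smul (K := 𝕜)]

theorem PosSemidef.smul_eq_sum_vecMulVec [Fintype m] [DecidableEq m] {A : Matrix m m 𝕜}
    (hA : A.PosSemidef) {r : ℝ} (hr : 0 ≤ r) :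
    r • A = ∑ j, vecMulVec ((√(r * hA.1.eigenvalues j) : 𝕜) • ⇑(hA.1.eigenvectorBasis j))
      (star ((√(r * hA.1.eigenvalues j) : 𝕜) • ⇑(hA.1.eigenvectorBasis j))) := by
  conv_lhs => rw [hA.1.eq_sum_eigenvalues_smul_vecMulVec, Finset.smul_sum]
  refine Finset.sum_congr rfl fun j _ => ?_
  rw [smul_smul, smul_vecMulVec_self_star (mul_nonneg hr (hA.eigenvalues_nonneg j))]

end Matrix

theorem vnEntropy_sum_vecMulVec_le {n : ℕ} {α : Type*} [Fintype α]
    (ψ : α → EuclideanSpace ℂ (Fin n)) :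
    vnEntropy (∑ a, vecMulVec ⇑(ψ a) (star ⇑(ψ a))) ≤ ∑ a, negMulLog (‖ψ a‖ ^ 2) := by
  set ρ := ∑ a, vecMulVec ⇑(ψ a) (star ⇑(ψ a))
  have hH : ρ.IsHermitian :=
    (posSemidef_sum _ fun a _ => posSemidef_vecMulVec_self_star _).isHermitian
  set e := hH.eigenvectorBasis
  let Φ : Matrix α (Fin n) ℂ := of fun a k => ⟪ψ a, e k⟫_ℂ
  have hgram : Φᴴ * Φ = diagonal fun k => (hH.eigenvalues k : ℂ) := by
    ext k k'
    calc (Φᴴ * Φ) k k' = ∑ a, ⟪e k, ψ a⟫_ℂ * ⟪ψ a, e k'⟫_ℂ := by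
          simp [mul_apply, Φ]
      _ = ⟪e k, WithLp.toLp 2 (ρ *ᵥ ⇑(e k'))⟫_ℂ := (inner_toLp_sum_vecMulVec_mulVec ψ _ _).symm
      _ = _ := by
          rw [hH.mulVec_eigenvectorBasis]
          by_cases h : k = k' <;> simp [e, hH.eigenvectorBasis.inner_eq_ite, h]
  have hcol : ∀ k, ∑ a, ‖Φ a k‖ ^ 2 = hH.eigenvalues k := fun k => by
    have h := conjTranspose_mul_self_apply_self Φ k
    rw [hgram, diagonal_apply_eq] at h
    exact Complex.ofReal_injective h.symm
  have hrow : ∀ a, ∑ k, ‖Φ a k‖ ^ 2 = ‖ψ a‖ ^ 2 := fun a => e.sum_sq_norm_inner_left (ψ a)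
  have key := sum_negMulLog_sum_norm_sq_le_of_isDiag (hgram ▸ isDiag_diagonal _)
  rw [vnEntropy, dif_pos hH]
  simpa only [hcol, hrow] using key

theorem mixing_entropy_bound_general {n : ℕ} {ι : Type*} [Fintype ι]
    (p : ι → ℝ) (ρ : ι → Matrix (Fin n) (Fin n) ℂ)
    (hp : ∀ i, 0 ≤ p i)
    (hρ : ∀ i, (ρ i).PosSemidef) (htr : ∀ i, (ρ i).trace = 1) :
    vnEntropy (∑ i, (p i : ℂ) • ρ i) - ∑ i, p i * vnEntropy (ρ i) ≤
      ∑ i, Real.negMulLog (p i) := by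
  set μ : ι → Fin n → ℝ := fun i => (hρ i).1.eigenvalues
  have hμ : ∀ i j, 0 ≤ p i * μ i j := fun i j => mul_nonneg (hp i) ((hρ i).eigenvalues_nonneg j)
  have hμ1 : ∀ i, ∑ j, μ i j = 1 := fun i => by
    have h := (hρ i).1.trace_eq_sum_eigenvalues.symm.trans (htr i)
    rw [← RCLike.ofReal_sum] at h
    exact Complex.ofReal_eq_one.mp h
  let ψ : ι × Fin n → EuclideanSpace ℂ (Fin n) := fun ij =>
    (√(p ij.1 * μ ij.1 ij.2) : ℂ) • (hρ ij.1).1.eigenvectorBasis ij.2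
  have hmix : ∑ i, (p i : ℂ) • ρ i = ∑ ij, vecMulVec ⇑(ψ ij) (star ⇑(ψ ij)) := by
    rw [Fintype.sum_prod_type]
    exact Finset.sum_congr rfl fun i _ => by
      rw [Complex.coe_smul, (hρ i).smul_eq_sum_vecMulVec (hp i)]; rfl
  have hnorm : ∀ ij, ‖ψ ij‖ ^ 2 = p ij.1 * μ ij.1 ij.2 := fun ⟨i, j⟩ => by
    simp [ψ, norm_smul, Real.sq_sqrt (hμ i j)]
  have hS : ∀ i, vnEntropy (ρ i) = ∑ j, negMulLog (μ i j) := fun i => dif_pos (hρ i).1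
  rw [sub_le_iff_le_add]
  calc vnEntropy (∑ i, (p i : ℂ) • ρ i) ≤ ∑ ij, negMulLog (‖ψ ij‖ ^ 2) :=
        hmix ▸ vnEntropy_sum_vecMulVec_le ψ
    _ = ∑ i, ∑ j, negMulLog (p i * μ i j) := by simp only [hnorm, Fintype.sum_prod_type]
    _ = _ := by simp only [Real.sum_sum_negMulLog_mul p hμ1, hS]

/-- Concavity bound for the von Neumann entropy of a mixture: for a convex combination
`ρ = Σ_i p_i ρ_i` of density matrices, `S(Σ_i p_i ρ_i) − Σ_i p_i S(ρ_i) ≤ H(p)`,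
where `H(p) = −Σ_i p_i log p_i` is the Shannon entropy of the distribution `(p_i)`. -/
theorem mixing_entropy_bound {n : ℕ} {ι : Type*} [Fintype ι]
    (p : ι → ℝ) (ρ : ι → Matrix (Fin n) (Fin n) ℂ)
    (hp : ∀ i, 0 ≤ p i) (hp1 : ∑ i, p i = 1)
    (hρ : ∀ i, (ρ i).PosSemidef) (htr : ∀ i, (ρ i).trace = 1) :
    vnEntropy (∑ i, (p i : ℂ) • ρ i) - ∑ i, p i * vnEntropy (ρ i) ≤
      ∑ i, Real.negMulLog (p i) :=
  mixing_entropy_bound_general p ρ hp hρ htr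
end
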